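/- arXiv:1412.7559 — 3 statements merged into one kernel-verified Lean document; each statement's English description precedes it below -/
import Mathlib

section
/- Let σ be a defining density for a hypersurface Σ in a conformal (n+1)-manifold, with I² nowhere zero near Σ. For each positive integer k, the operator P_k := (−(1/I²) I·D)^k acting on any tractor bundle of weight (k−n)/2 is tangential along Σ: P_k ∘ σ = σ ∘ P̃_k for some linear operator P̃_k. Hence P_k(f + σh)|_Σ = P_k f|_Σ, so P_k determines a well-defined operator on Σ. -/
/-- Tangentiality of the operators `P_k = (−(1/I²)I·D)^k` along `Σ = Z(σ)`:
in terms of the sl(2) operators `X = σ`, `Y = −(1/I²)I·D`, `H = d + 2w`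
(with `d = n+1`), on a vector of weight `(k−n)/2 − 1` (i.e. an `H`-eigenvector
with eigenvalue `(n+1) + 2((k−n)/2 − 1) = k−1`) one has `Y^k ∘ X = X ∘ Y^k`;
hence `P_k(f + σu)` agrees with `P_k f` modulo `σ`, so `P_k` determines a
well-defined operator along `Σ`. -/
theorem tangential_operators_Pk
    {V : Type*} [AddCommGroup V] [Module ℝ V]
    (n : ℕ) (k : ℕ) (hk : 1 ≤ k)
    (X Y H : Module.End ℝ V)
    (hHX : H * X - X * H = 2 * X)
    (hHY : H * Y - Y * H = -(2 * Y))
    (hXY : X * Y - Y * X = H) :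
    (∀ v : V, H v = (((n : ℝ) + 1) + 2 * ((((k : ℝ) - (n : ℝ)) / 2) - 1)) • v →
      (Y ^ k) (X v) = X ((Y ^ k) v)) ∧
    (∀ (f u : V), H u = (((n : ℝ) + 1) + 2 * ((((k : ℝ) - (n : ℝ)) / 2) - 1)) • u →
      (Y ^ k) (f + X u) = (Y ^ k) f + X ((Y ^ k) u)) := by
  have h2Y : H * Y = Y * H - (2:ℝ) • Y := by
    have h := sub_eq_iff_eq_add.mp hHY
    rw [h, two_smul, two_mul]; abel
  have hXY' : X * Y = H + Y * X := sub_eq_iff_eq_add.mp hXY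
  have pull : ∀ (m : ℕ) (A : Module.End ℝ V), Y * (Y ^ m * A) = Y ^ (m + 1) * A := by
    intro m A; rw [← mul_assoc, ← pow_succ']
  have hA : ∀ m : ℕ, H * Y ^ m = Y ^ m * H - ((2 * m : ℝ)) • Y ^ m := by
    intro m
    induction m with
    | zero => simp
    | succ m ih =>
      have e1 : H * Y ^ (m + 1) = (H * Y) * Y ^ m := by
        rw [pow_succ', ← mul_assoc]
      rw [e1, h2Y, sub_mul, smul_mul_assoc, mul_assoc, ih, ← pow_succ',
        mul_sub, mul_smul_comm, ← pow_succ', pull]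
      push_cast
      module
  have hB : ∀ m : ℕ, X * Y ^ (m + 1) =
      Y ^ (m + 1) * X + ((m : ℝ) + 1) • (Y ^ m * H)
        - (((m : ℝ) + 1) * m) • Y ^ m := by
    intro m
    induction m with
    | zero =>
      simp only [zero_add, pow_one, pow_zero, Nat.cast_zero, one_smul, mul_one,
        mul_zero, zero_smul, sub_zero, one_mul, hXY']
      abel
    | succ m ih =>
      have e1 : X * Y ^ (m + 2) = (X * Y) * Y ^ (m + 1) := by
        rw [pow_succ', ← mul_assoc]
      rw [e1, hXY', add_mul, mul_assoc, ih, hA (m + 1)]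
      rw [mul_sub, mul_add, mul_smul_comm, mul_smul_comm, pull, pull, ← pow_succ']
      push_cast
      module
  obtain ⟨m, rfl⟩ : ∃ m, k = m + 1 := ⟨k - 1, (Nat.succ_pred_eq_of_pos hk).symm⟩
  have key : ∀ v : V,
      H v = (((n : ℝ) + 1) + 2 * ((((m + 1 : ℕ) : ℝ) - (n : ℝ)) / 2 - 1)) • v →
      (Y ^ (m + 1)) (X v) = X ((Y ^ (m + 1)) v) := by
    intro v hv
    have hc : (((n : ℝ) + 1) + 2 * ((((m + 1 : ℕ) : ℝ) - (n : ℝ)) / 2 - 1)) = (m : ℝ) := by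
      push_cast; ring
    rw [hc] at hv
    have happ := congrArg (fun T : Module.End ℝ V => T v) (hB m)
    simp only [Module.End.mul_apply, LinearMap.add_apply, LinearMap.sub_apply,
      LinearMap.smul_apply] at happ
    rw [hv, map_smul] at happ
    rw [happ]
    module
  refine ⟨key, fun f u hu => ?_⟩
  rw [map_add, key u hu]
end

section
/- Let σ be a defining density for Σ with I² nowhere zero, f₀ a section of a weighted tractor bundle of weight w₀, and h₀ = d + 2w₀. Suppose f^{(ℓ)} = f₀ + σf₁ + ⋯ + σ^ℓ f_ℓ satisfies I·D f^{(ℓ)} = O(σ^ℓ). If ℓ ≠ h₀ − 2, then there exists f_{ℓ+1}, unique along Σ, such that I·D(f^{(ℓ)} + σ^{ℓ+1}f_{ℓ+1}) = O(σ^{ℓ+1}). If ℓ = h₀ − 2, then I·D(f^{(ℓ)} + σ^{ℓ+1}f_{ℓ+1}) = I·D f^{(ℓ)} mod O(σ^{ℓ+1}) for every choice of f_{ℓ+1}. -/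
private lemma Y_pow_apply {V : Type*} [AddCommGroup V] [Module ℝ V]
    (X Y H : Module.End ℝ V)
    (hHXp : ∀ v : V, H (X v) = X (H v) + (2 : ℝ) • X v)
    (hYXp : ∀ v : V, Y (X v) = X (Y v) - H v) :
    ∀ (n : ℕ) (g : V), Y ((X ^ (n + 1)) g)
      = (X ^ (n + 1)) (Y g) - ((n : ℝ) + 1) • (X ^ n) (H g)
        - (((n : ℝ) + 1) * n) • (X ^ n) g := by
  have haux : ∀ (m : ℕ) (w : V), (X ^ (m + 1)) w = (X ^ m) (X w) := by
    intro m w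
    rw [pow_succ, Module.End.mul_apply]
  intro n
  induction n with
  | zero =>
      intro g
      simp only [zero_add, pow_one, pow_zero, Module.End.one_apply, Nat.cast_zero]
      rw [hYXp g]
      module
  | succ n ih =>
      intro g
      rw [show ((n : ℕ) + 1 + 1) = (n + 1) + 1 from rfl, haux (n + 1) g, ih (X g),
        hYXp g, hHXp g, map_sub, map_add, map_smul, ← haux, ← haux, ← haux]
      push_cast
      module

/-- One step of the asymptotic extension problem for `I·D f = 0`, in the formal
sl(2) picture (`X = σ`, `Y = −(1/I²)I·D`, `H = d + 2w`).  Suppose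
`Y fℓ = X^ℓ u` (i.e. `I·D f^{(ℓ)} = O(σ^ℓ)`), where `u` has weight
`w₀ − ℓ − 1` (an `H`-eigenvector with eigenvalue `h₀ − 2(ℓ+1)`).  If
`ℓ ≠ h₀ − 2` there is a correction `f_{ℓ+1}` of that weight, unique along `Σ`
(i.e. modulo the stated `X^{ℓ+1}`-ambiguity), with
`Y(fℓ + X^{ℓ+1} f_{ℓ+1}) = O(σ^{ℓ+1})`; if `ℓ = h₀ − 2` then
`Y(fℓ + X^{ℓ+1} g) ≡ Y fℓ mod O(σ^{ℓ+1})` for every choice of `g`. -/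
theorem extension_problem_step
    {V : Type*} [AddCommGroup V] [Module ℝ V]
    (X Y H : Module.End ℝ V)
    (hHX : H * X - X * H = 2 * X)
    (hHY : H * Y - Y * H = -(2 * Y))
    (hXY : X * Y - Y * X = H)
    (h₀ : ℝ) (ℓ : ℕ) (fℓ u : V)
    (hf : Y fℓ = (X ^ ℓ) u)
    (hu : H u = (h₀ - 2 * ((ℓ : ℝ) + 1)) • u) :
    ((ℓ : ℝ) ≠ h₀ - 2 →
      ∃ fnext : V, H fnext = (h₀ - 2 * ((ℓ : ℝ) + 1)) • fnext ∧
        ∃ v : V, Y (fℓ + (X ^ (ℓ + 1)) fnext) = (X ^ (ℓ + 1)) v) ∧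
    ((ℓ : ℝ) = h₀ - 2 →
      ∀ gg : V, H gg = (h₀ - 2 * ((ℓ : ℝ) + 1)) • gg →
        ∃ v : V, Y (fℓ + (X ^ (ℓ + 1)) gg) = Y fℓ + (X ^ (ℓ + 1)) v) ∧
    (∀ gg gg' : V,
      H gg = (h₀ - 2 * ((ℓ : ℝ) + 1)) • gg →
      H gg' = (h₀ - 2 * ((ℓ : ℝ) + 1)) • gg' →
      (∃ v, Y (fℓ + (X ^ (ℓ + 1)) gg) = (X ^ (ℓ + 1)) v) →
      (∃ v, Y (fℓ + (X ^ (ℓ + 1)) gg') = (X ^ (ℓ + 1)) v) →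
      ∃ v, (((ℓ : ℝ) + 1) * (h₀ - (ℓ : ℝ) - 2)) • (X ^ ℓ) (gg - gg')
        = (X ^ (ℓ + 1)) v) := by
  -- pointwise commutation relations
  have hHXp : ∀ v : V, H (X v) = X (H v) + (2 : ℝ) • X v := by
    intro v
    have h := congrArg (fun A : Module.End ℝ V => A v) (hHX.trans (two_mul X))
    simp only [LinearMap.sub_apply, Module.End.mul_apply, LinearMap.add_apply] at h
    linear_combination (norm := module) h
  have hYXp : ∀ v : V, Y (X v) = X (Y v) - H v := by
    intro v
    have h := congrArg (fun A : Module.End ℝ V => A v) hXY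
    simp only [LinearMap.sub_apply, Module.End.mul_apply] at h
    linear_combination (norm := module) -h
  set c : ℝ := ((ℓ : ℝ) + 1) * (h₀ - (ℓ : ℝ) - 2) with hc
  have key : ∀ g : V, H g = (h₀ - 2 * ((ℓ : ℝ) + 1)) • g →
      Y ((X ^ (ℓ + 1)) g) = (X ^ (ℓ + 1)) (Y g) - c • (X ^ ℓ) g := by
    intro g hg
    rw [Y_pow_apply X Y H hHXp hYXp ℓ g, hg, map_smul, smul_smul, hc]
    module
  refine ⟨?_, ?_, ?_⟩
  · intro hne
    have hcne : c ≠ 0 := by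
      rw [hc]
      apply mul_ne_zero
      · positivity
      · intro h; apply hne; linarith [sub_eq_zero.mp h]
    have hw : H (c⁻¹ • u) = (h₀ - 2 * ((ℓ : ℝ) + 1)) • (c⁻¹ • u) := by
      rw [map_smul, hu, smul_comm]
    refine ⟨c⁻¹ • u, hw, Y (c⁻¹ • u), ?_⟩
    rw [map_add, key _ hw, hf]
    have hcu : c • (X ^ ℓ) (c⁻¹ • u) = (X ^ ℓ) u := by
      rw [map_smul, smul_smul, mul_inv_cancel₀ hcne, one_smul]
    rw [hcu]
    abel
  · intro heq gg hgg
    have hc0 : c = 0 := by rw [hc, heq]; ring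
    exact ⟨Y gg, by rw [map_add, key gg hgg, hc0, zero_smul, sub_zero]⟩
  · rintro gg gg' hgg hgg' ⟨v, hv⟩ ⟨v', hv'⟩
    have h1 : Y fℓ + ((X ^ (ℓ + 1)) (Y gg) - c • (X ^ ℓ) gg) = (X ^ (ℓ + 1)) v := by
      rw [← hv, map_add, key gg hgg]
    have h2 : Y fℓ + ((X ^ (ℓ + 1)) (Y gg') - c • (X ^ ℓ) gg') = (X ^ (ℓ + 1)) v' := by
      rw [← hv', map_add, key gg' hgg']
    refine ⟨Y gg - Y gg' - v + v', ?_⟩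
    simp only [map_sub, map_add]
    linear_combination (norm := module) h2 - h1
end

section
/- Let (M^d, c, I) be an almost pseudo-Riemannian structure with σ = h(X,I), singularity set Σ = Z(σ) ≠ ∅, and I² = ±1 + σ²f for some smooth density f. Then along Σ the scale tractor equals the normal tractor: I|_Σ = N, i.e. in any scale g, I|_Σ = (0, n_a, −H) where n_a = ∇_aσ is the (unit) conormal and H = (1/d)Δσ is the mean curvature of Σ. -/
open Finset

/-- For an almost pseudo-Riemannian structure with `I² = ε + σ²f` (`ε = ±1`),
along the zero locus `Σ = Z(σ)` the scale tractor equals the normal tractor: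
in any scale `I|_Σ = (0, n_a, −H)`, i.e. `n_a = ∇_aσ` is a conormal with
`|n|² = ε`, and the bottom slot `ρ = −(1/d)(Δσ + Jσ)` equals minus the mean
curvature `H = (1/(d−1))(∇^a n_a − ε n^a n^b ∇_b n_a) = (1/d)Δσ` on Σ. -/
theorem scale_tractor_equals_normal_tractor_on_zero_locus
    {M ι : Type*} [Fintype ι] (d : ℕ) (hd : Fintype.card ι = d) (hd3 : 3 ≤ d)
    (g ginv P : M → ι → ι → ℝ) (σ f : M → ℝ) (ε : ℝ) (hε : ε = 1 ∨ ε = -1)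
    (nabS : (M → ℝ) → M → ι → ℝ)
    (nab1 : (M → ι → ℝ) → M → ι → ι → ℝ)
    (hgsym : ∀ x a b, g x a b = g x b a)
    (hginvsym : ∀ x a b, ginv x a b = ginv x b a)
    (hHessSym : ∀ x a b, nab1 (nabS σ) x a b = nab1 (nabS σ) x b a)
    -- I² = ε + σ²f, where I ≅ (σ, ∇σ, ρ), ρ = −(1/d)(Δσ + Jσ):
    (hI2 : ∀ x, 2 * σ x * (-(1/(d:ℝ)) *
          ((∑ a, ∑ b, ginv x a b * nab1 (nabS σ) x a b)
            + (∑ a, ∑ b, ginv x a b * P x a b) * σ x))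
        + (∑ a, ∑ b, ginv x a b * nabS σ x a * nabS σ x b)
      = ε + σ x ^ 2 * f x)
    (hadd : ∀ (u v : M → ℝ) (x : M) (a : ι),
      nabS (fun y => u y + v y) x a = nabS u x a + nabS v x a)
    (hmul : ∀ (u v : M → ℝ) (x : M) (a : ι),
      nabS (fun y => u y * v y) x a = u x * nabS v x a + v x * nabS u x a)
    (hconst : ∀ (c : ℝ) (x : M) (a : ι), nabS (fun _ => c) x a = 0)
    (hcompat : ∀ (x : M) (a : ι),
      nabS (fun y => ∑ b, ∑ c, ginv y b c * nabS σ y b * nabS σ y c) x a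
        = 2 * ∑ b, ∑ c, ginv x b c * nabS σ x b * nab1 (nabS σ) x a c) :
    ∀ x : M, σ x = 0 →
      -- n_a = ∇_aσ is a conormal of squared length ε along Σ:
      ((∑ a, ∑ b, ginv x a b * nabS σ x a * nabS σ x b) = ε ∧
      -- the mean curvature satisfies H = (1/d)Δσ along Σ:
      (1/((d:ℝ)-1)) *
        ((∑ a, ∑ b, ginv x a b * nab1 (nabS σ) x a b)
          - ε * (∑ a, ∑ b, (∑ c, ginv x a c * nabS σ x c) * (∑ c, ginv x b c * nabS σ x c)
              * nab1 (nabS σ) x a b))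
        = (1/(d:ℝ)) * (∑ a, ∑ b, ginv x a b * nab1 (nabS σ) x a b) ∧
      -- hence the bottom slot of I equals −H along Σ:
      (-(1/(d:ℝ)) * ((∑ a, ∑ b, ginv x a b * nab1 (nabS σ) x a b)
          + (∑ a, ∑ b, ginv x a b * P x a b) * σ x))
        = - ((1/((d:ℝ)-1)) *
            ((∑ a, ∑ b, ginv x a b * nab1 (nabS σ) x a b)
              - ε * (∑ a, ∑ b, (∑ c, ginv x a c * nabS σ x c) * (∑ c, ginv x b c * nabS σ x c)
                  * nab1 (nabS σ) x a b)))) := by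
  intro x hx
  have hd3' : (3:ℝ) ≤ (d:ℝ) := by exact_mod_cast hd3
  have hd0 : (d:ℝ) ≠ 0 := by linarith
  have hd1 : (d:ℝ) - 1 ≠ 0 := by linarith
  have hε2 : ε * ε = 1 := by rcases hε with h | h <;> rw [h] <;> norm_num
  have hA : (∑ a, ∑ b, ginv x a b * nabS σ x a * nabS σ x b) = ε := by
    have h := hI2 x
    rw [hx] at h
    simpa using h
  have hfun : (fun y => ∑ b, ∑ c, ginv y b c * nabS σ y b * nabS σ y c)
      = (fun y => ε + σ y * (σ y * f y + (2/(d:ℝ)) *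
          ((∑ a, ∑ b, ginv y a b * nab1 (nabS σ) y a b)
            + (∑ a, ∑ b, ginv y a b * P y a b) * σ y))) := by
    funext y
    linear_combination hI2 y
  have key : ∀ a, (∑ b, ∑ c, ginv x b c * nabS σ x b * nab1 (nabS σ) x a c)
      = ((1/(d:ℝ)) * (∑ a', ∑ b, ginv x a' b * nab1 (nabS σ) x a' b)) * nabS σ x a := by
    intro a
    have e1 := hcompat x a
    rw [hfun] at e1
    have e2 := hadd (fun _ => ε) (fun y => σ y * (σ y * f y + (2/(d:ℝ)) *
          ((∑ a, ∑ b, ginv y a b * nab1 (nabS σ) y a b)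
            + (∑ a, ∑ b, ginv y a b * P y a b) * σ y))) x a
    have e3 := hmul σ (fun y => σ y * f y + (2/(d:ℝ)) *
          ((∑ a, ∑ b, ginv y a b * nab1 (nabS σ) y a b)
            + (∑ a, ∑ b, ginv y a b * P y a b) * σ y)) x a
    have e4 := hconst ε x a
    rw [e2, e4, e3, hx] at e1
    linear_combination (-1/2 : ℝ) * e1
  have hS : ∀ a, (∑ b, ∑ c, ginv x b c * nabS σ x b * nab1 (nabS σ) x a c)
      = ∑ b, (∑ c, ginv x b c * nabS σ x c) * nab1 (nabS σ) x a b := by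
    intro a
    rw [Finset.sum_comm]
    refine Finset.sum_congr rfl fun b _ => ?_
    rw [Finset.sum_mul]
    refine Finset.sum_congr rfl fun c _ => ?_
    rw [hginvsym x c b]
  have hT : (∑ a, ∑ b, (∑ c, ginv x a c * nabS σ x c) * (∑ c, ginv x b c * nabS σ x c)
        * nab1 (nabS σ) x a b)
      = (1/(d:ℝ)) * (∑ a, ∑ b, ginv x a b * nab1 (nabS σ) x a b) * ε := by
    have h1 : ∀ a, (∑ b, (∑ c, ginv x a c * nabS σ x c) * (∑ c, ginv x b c * nabS σ x c)
          * nab1 (nabS σ) x a b)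
        = (∑ c, ginv x a c * nabS σ x c) *
            (((1/(d:ℝ)) * (∑ a', ∑ b, ginv x a' b * nab1 (nabS σ) x a' b)) * nabS σ x a) := by
      intro a
      rw [← key a, hS a, Finset.mul_sum]
      exact Finset.sum_congr rfl fun b _ => by ring
    calc (∑ a, ∑ b, (∑ c, ginv x a c * nabS σ x c) * (∑ c, ginv x b c * nabS σ x c)
            * nab1 (nabS σ) x a b)
        = ∑ a, (∑ c, ginv x a c * nabS σ x c) *
            (((1/(d:ℝ)) * (∑ a', ∑ b, ginv x a' b * nab1 (nabS σ) x a' b)) * nabS σ x a) :=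
          Finset.sum_congr rfl fun a _ => h1 a
      _ = ∑ a, ((1/(d:ℝ)) * (∑ a', ∑ b, ginv x a' b * nab1 (nabS σ) x a' b)) *
            ((∑ c, ginv x a c * nabS σ x c) * nabS σ x a) :=
          Finset.sum_congr rfl fun a _ => by ring
      _ = ((1/(d:ℝ)) * (∑ a', ∑ b, ginv x a' b * nab1 (nabS σ) x a' b)) *
            ∑ a, ((∑ c, ginv x a c * nabS σ x c) * nabS σ x a) :=
          (Finset.mul_sum Finset.univ
            (fun a => (∑ c, ginv x a c * nabS σ x c) * nabS σ x a)
            ((1/(d:ℝ)) * (∑ a', ∑ b, ginv x a' b * nab1 (nabS σ) x a' b))).symm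
      _ = (1/(d:ℝ)) * (∑ a', ∑ b, ginv x a' b * nab1 (nabS σ) x a' b) *
            (∑ a, ∑ c, ginv x a c * nabS σ x a * nabS σ x c) := by
          refine congrArg (HMul.hMul ((1/(d:ℝ)) *
            (∑ a', ∑ b, ginv x a' b * nab1 (nabS σ) x a' b))) ?_
          refine Finset.sum_congr rfl fun a _ => ?_
          rw [Finset.sum_mul]
          exact Finset.sum_congr rfl fun c _ => by ring
      _ = (1/(d:ℝ)) * (∑ a, ∑ b, ginv x a b * nab1 (nabS σ) x a b) * ε := by rw [hA]
  have hgoal2 : (1/((d:ℝ)-1)) *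
        ((∑ a, ∑ b, ginv x a b * nab1 (nabS σ) x a b)
          - ε * (∑ a, ∑ b, (∑ c, ginv x a c * nabS σ x c) * (∑ c, ginv x b c * nabS σ x c)
              * nab1 (nabS σ) x a b))
        = (1/(d:ℝ)) * (∑ a, ∑ b, ginv x a b * nab1 (nabS σ) x a b) := by
    have heps : ε * ((1/(d:ℝ)) * (∑ a, ∑ b, ginv x a b * nab1 (nabS σ) x a b) * ε)
        = (1/(d:ℝ)) * (∑ a, ∑ b, ginv x a b * nab1 (nabS σ) x a b) := by
      calc ε * ((1/(d:ℝ)) * (∑ a, ∑ b, ginv x a b * nab1 (nabS σ) x a b) * ε)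
          = (1/(d:ℝ)) * (∑ a, ∑ b, ginv x a b * nab1 (nabS σ) x a b) * (ε * ε) := by ring
        _ = (1/(d:ℝ)) * (∑ a, ∑ b, ginv x a b * nab1 (nabS σ) x a b) := by rw [hε2, mul_one]
    rw [hT, heps]
    field_simp
  refine ⟨hA, hgoal2, ?_⟩
  rw [hx, hgoal2]
  ring
end
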